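/- arXiv:2406.13835 — 5 statements merged into one kernel-verified Lean document; each statement's English description precedes it below -/
import Mathlib

section
/- Let v be a nonnegative random variable with CDF F, and let r > 0 be a revenue-maximizing price for F, i.e., r·(1 - F(r)) maximizes x·(1 - F(x)). Then E[min(v, r)] ≤ (1 - F(r))·r·(1 + log(1/(1 - F(r)))), assuming 0 < 1 - F(r) ≤ 1. -/
open MeasureTheory ProbabilityTheory Set

theorem stmt_2 {Ω : Type*} [MeasurableSpace Ω] (P : Measure Ω) [IsProbabilityMeasure P]
    (v : Ω → ℝ) (hv : Measurable v) (hv0 : ∀ᵐ ω ∂P, 0 ≤ v ω)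
    (F : ℝ → ℝ) (hF : ∀ x, F x = (P {ω | v ω < x}).toReal)
    (r : ℝ) (hr : 0 < r)
    (hmax : ∀ w, 0 ≤ w → w * (1 - F w) ≤ r * (1 - F r))
    (hs0 : 0 < 1 - F r) (hs1 : 1 - F r ≤ 1) :
    ∫ ω, min (v ω) r ∂P ≤ (1 - F r) * r * (1 + Real.log (1 / (1 - F r))) := by
  set s : ℝ := 1 - F r with hs
  set g : ℝ → ℝ := fun t => (P {ω | t ≤ v ω}).toReal with hg
  -- g t = 1 - F t
  have hgF : ∀ t, g t = 1 - F t := by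
    intro t
    have hcompl : {ω | t ≤ v ω} = {ω | v ω < t}ᶜ := by
      ext ω; simp [not_lt]
    have hmeas : MeasurableSet {ω | v ω < t} := hv measurableSet_Iio
    show (P {ω | t ≤ v ω}).toReal = 1 - F t
    rw [hcompl, prob_compl_eq_one_sub hmeas, hF,
      ENNReal.toReal_sub_of_le prob_le_one ENNReal.one_ne_top, ENNReal.toReal_one]
  have hg_le_one : ∀ t, g t ≤ 1 := fun t => by
    simpa using ENNReal.toReal_mono ENNReal.one_ne_top (prob_le_one (μ := P))
  have hg_nonneg : ∀ t, 0 ≤ g t := fun t => ENNReal.toReal_nonneg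
  have hg_meas : Measurable g := by
    apply Measurable.ennreal_toReal
    exact Antitone.measurable (fun a b hab => measure_mono (fun ω h => hab.trans h))
  -- integrability of min
  have hmin_meas : Measurable (fun ω => min (v ω) r) := hv.min measurable_const
  have hmin_int : Integrable (fun ω => min (v ω) r) P := by
    apply Integrable.mono' (integrable_const r) hmin_meas.aestronglyMeasurable
    filter_upwards [hv0] with ω hω
    rw [Real.norm_eq_abs, abs_le]
    exact ⟨by linarith [min_le_right (v ω) r, le_min hω hr.le], min_le_right _ _⟩
  have hmin_nn : 0 ≤ᵐ[P] (fun ω => min (v ω) r) := by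
    filter_upwards [hv0] with ω hω
    exact le_min hω hr.le
  -- layer cake
  have hlayer : ∫ ω, min (v ω) r ∂P = ∫ t in Ioc 0 r, g t := by
    rw [hmin_int.integral_eq_integral_Ioc_meas_le hmin_nn
      (Filter.Eventually.of_forall fun ω => min_le_right _ _)]
    apply setIntegral_congr_fun measurableSet_Ioc
    intro t ht
    have h : {a | t ≤ min (v a) r} = {ω | t ≤ v ω} := by
      ext ω; simp [le_min_iff, ht.2]
    show (P {a | t ≤ min (v a) r}).toReal = (P {ω | t ≤ v ω}).toReal
    rw [h]
  rw [hlayer]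
  -- split Ioc 0 r = Ioc 0 (s*r) ∪ Ioc (s*r) r
  have hsr_pos : 0 < s * r := mul_pos hs0 hr
  have hsr_le : s * r ≤ r := by nlinarith
  have hg_int1 : IntegrableOn g (Ioc 0 (s*r)) volume := by
    apply Measure.integrableOn_of_bounded (M := 1) (by simp) hg_meas.aestronglyMeasurable
    exact Filter.Eventually.of_forall fun t => by
      rw [Real.norm_eq_abs, abs_of_nonneg (hg_nonneg t)]; exact hg_le_one t
  have hg_int2 : IntegrableOn g (Ioc (s*r) r) volume := by
    apply Measure.integrableOn_of_bounded (M := 1) (by simp) hg_meas.aestronglyMeasurable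
    exact Filter.Eventually.of_forall fun t => by
      rw [Real.norm_eq_abs, abs_of_nonneg (hg_nonneg t)]; exact hg_le_one t
  have hsplit : ∫ t in Ioc 0 r, g t = (∫ t in Ioc 0 (s*r), g t) + ∫ t in Ioc (s*r) r, g t := by
    rw [← setIntegral_union (Set.Ioc_disjoint_Ioc_of_le le_rfl) measurableSet_Ioc hg_int1 hg_int2,
      Set.Ioc_union_Ioc_eq_Ioc hsr_pos.le hsr_le]
  rw [hsplit]
  -- first piece ≤ s * r
  have h1 : ∫ t in Ioc 0 (s*r), g t ≤ s * r := by
    calc ∫ t in Ioc 0 (s*r), g t ≤ ∫ _t in Ioc 0 (s*r), (1:ℝ) :=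
          setIntegral_mono_on hg_int1 ((integrableOn_const_iff (C := (1:ℝ))).mpr (Or.inr (by simp)))
            measurableSet_Ioc (fun t _ => hg_le_one t)
      _ = s * r := by simp [Real.volume_Ioc, hsr_pos.le]
  -- second piece
  have hbound : ∀ t ∈ Ioc (s*r) r, g t ≤ s * r / t := by
    intro t ht
    have ht0 : 0 < t := hsr_pos.trans ht.1
    have := hmax t ht0.le
    rw [← hgF t] at this
    rw [div_eq_mul_inv, ← mul_comm]
    calc g t = t⁻¹ * (t * g t) := by field_simp
      _ ≤ t⁻¹ * (r * s) := by
          apply mul_le_mul_of_nonneg_left _ (inv_nonneg.mpr ht0.le)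
          linarith [this]
      _ = t⁻¹ * (s * r) := by ring
  have hcont : ContinuousOn (fun t : ℝ => s * r / t) (Ioc (s*r) r) := by
    apply ContinuousOn.div continuousOn_const continuousOn_id
    intro t ht
    exact (hsr_pos.trans ht.1).ne'
  have hint2 : IntegrableOn (fun t : ℝ => s * r / t) (Ioc (s*r) r) volume := by
    apply (ContinuousOn.integrableOn_Icc ?_).mono_set Ioc_subset_Icc_self
    apply ContinuousOn.div continuousOn_const continuousOn_id
    intro t ht
    exact (hsr_pos.trans_le ht.1).ne'
  have h2 : ∫ t in Ioc (s*r) r, g t ≤ s * r * Real.log (1/s) := by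
    calc ∫ t in Ioc (s*r) r, g t ≤ ∫ t in Ioc (s*r) r, s * r / t :=
          setIntegral_mono_on hg_int2 hint2 measurableSet_Ioc hbound
      _ = ∫ t in (s*r)..r, s * r / t := (intervalIntegral.integral_of_le hsr_le).symm
      _ = s * r * ∫ t in (s*r)..r, 1 / t := by
          rw [← intervalIntegral.integral_const_mul]
          congr 1; ext t; ring
      _ = s * r * Real.log (r / (s*r)) := by
          rw [integral_one_div]
          intro h
          rcases h with h
          exact absurd h (by simp [Set.uIcc_of_le hsr_le]; intro h'; linarith)
      _ = s * r * Real.log (1/s) := by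
          congr 1
          have : r / (s*r) = 1/s := by field_simp
          rw [this]
  have := add_le_add h1 h2
  calc (∫ t in Ioc 0 (s*r), g t) + ∫ t in Ioc (s*r) r, g t ≤ s * r + s * r * Real.log (1/s) := this
    _ = s * r * (1 + Real.log (1/s)) := by ring
end

section
/- Let v be a nonnegative random variable with CDF F and let r > 0 be a revenue-maximizing price with sale probability s = 1 - F(r) ∈ (0, 1]. Then the variance of min(v, r) is at least s·r²·(1 - s)⁴/4. -/
open MeasureTheory ProbabilityTheory Set

lemma aux_log {s : ℝ} (h0 : 0 < s) (h1 : s ≤ 1) : s - s⁻¹ ≤ 2 * Real.log s := by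
  set f : ℝ → ℝ := fun x => 2 * Real.log x - (x - x⁻¹) with hf
  have hd : ∀ x : ℝ, 0 < x → HasDerivAt f (-((x - 1) ^ 2 / x ^ 2)) x := by
    intro x hx
    have h := ((Real.hasDerivAt_log hx.ne').const_mul 2).sub
      ((hasDerivAt_id x).sub (hasDerivAt_inv hx.ne'))
    refine h.congr_deriv ?_
    have hx0 := hx.ne'
    field_simp
    ring
  have hanti : AntitoneOn f (Icc s 1) := by
    apply antitoneOn_of_deriv_nonpos (convex_Icc s 1)
    · intro x hx
      exact (hd x (h0.trans_le hx.1)).continuousAt.continuousWithinAt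
    · intro x hx
      rw [interior_Icc] at hx
      exact (hd x (h0.trans hx.1)).differentiableAt.differentiableWithinAt
    · intro x hx
      rw [interior_Icc] at hx
      have hx0 : 0 < x := h0.trans hx.1
      rw [(hd x hx0).deriv]
      have : 0 ≤ (x - 1) ^ 2 / x ^ 2 := by positivity
      linarith
  have key : f 1 ≤ f s := hanti ⟨le_refl s, h1⟩ ⟨h1, le_refl 1⟩ h1
  simp only [f, Real.log_one, inv_one, mul_zero, sub_self, sub_zero] at key
  linarith

theorem stmt_3 {Ω : Type*} [MeasurableSpace Ω] (P : Measure Ω) [IsProbabilityMeasure P]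
    (v : Ω → ℝ) (hv : Measurable v) (hv0 : ∀ᵐ ω ∂P, 0 ≤ v ω)
    (F : ℝ → ℝ) (hF : ∀ x, F x = (P {ω | v ω < x}).toReal)
    (r : ℝ) (hr : 0 < r)
    (hmax : ∀ w, 0 ≤ w → w * (1 - F w) ≤ r * (1 - F r))
    (s : ℝ) (hs : s = 1 - F r) (hs0 : 0 < s) (hs1 : s ≤ 1) :
    variance (fun ω => min (v ω) r) P ≥ s * r ^ 2 * (1 - s) ^ 4 / 4 := by
  set X : Ω → ℝ := fun ω => min (v ω) r with hXdef
  have hXmeas : Measurable X := hv.min measurable_const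
  have hXle : ∀ ω, X ω ≤ r := fun ω => min_le_right _ _
  have hX0 : ∀ᵐ ω ∂P, 0 ≤ X ω := by
    filter_upwards [hv0] with ω h using le_min h hr.le
  have hXbdd : ∀ᵐ ω ∂P, ‖X ω‖ ≤ r := by
    filter_upwards [hX0] with ω h
    rw [Real.norm_eq_abs, abs_of_nonneg h]
    exact hXle ω
  have hmem : MemLp X 2 P := MemLp.of_bound hXmeas.aestronglyMeasurable r hXbdd
  have hint : Integrable X P := hmem.integrable one_le_two
  set μX : ℝ := ∫ ω, X ω ∂P with hμXdef
  -- tail probabilities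
  have hmeaslt : ∀ t : ℝ, MeasurableSet {ω | v ω < t} :=
    fun t => measurableSet_lt hv measurable_const
  have htail : ∀ t : ℝ, (P {ω | t ≤ v ω}).toReal = 1 - F t := by
    intro t
    have hset : {ω | t ≤ v ω} = {ω | v ω < t}ᶜ := by
      ext ω; simp [not_lt]
    rw [hset, measure_compl (hmeaslt t) (measure_ne_top _ _), measure_univ,
      ENNReal.toReal_sub_of_le prob_le_one ENNReal.one_ne_top, ENNReal.toReal_one, hF t]
  have htail_le : ∀ t : ℝ, 0 < t → 1 - F t ≤ r * s / t := by
    intro t ht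
    rw [le_div_iff₀ ht]
    calc (1 - F t) * t = t * (1 - F t) := mul_comm _ _
      _ ≤ r * (1 - F r) := hmax t ht.le
      _ = r * s := by rw [hs]
  -- layer cake
  set h : ℝ → ℝ := fun t => (P {ω | t ≤ X ω}).toReal with hhdef
  have hlayer : μX = ∫ t in Ioc 0 r, h t :=
    hint.integral_eq_integral_Ioc_meas_le hX0 (ae_of_all _ hXle)
  have hanti : Antitone h := fun t1 t2 h12 =>
    ENNReal.toReal_mono (measure_ne_top _ _)
      (measure_mono fun ω hω => le_trans h12 hω)
  have hhmeas : Measurable h := hanti.measurable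
  have hh0 : ∀ t, 0 ≤ h t := fun t => ENNReal.toReal_nonneg
  have hh1 : ∀ t, h t ≤ 1 := by
    intro t
    have := ENNReal.toReal_mono ENNReal.one_ne_top (prob_le_one (μ := P) (s := {ω | t ≤ X ω}))
    simpa using this
  have hhint : IntegrableOn h (Ioc 0 r) := by
    apply Integrable.mono' (g := fun _ => (1 : ℝ))
    · exact integrableOn_const measure_Ioc_lt_top.ne
    · exact hhmeas.aestronglyMeasurable
    · refine ae_of_all _ fun t => ?_
      rw [Real.norm_eq_abs, abs_of_nonneg (hh0 t)]
      exact hh1 t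
  -- h t ≤ r*s/t for t > 0
  have hh_le : ∀ t : ℝ, 0 < t → h t ≤ r * s / t := by
    intro t ht
    have hsub : {ω | t ≤ X ω} ⊆ {ω | t ≤ v ω} := by
      intro ω hω
      exact le_trans (hω : t ≤ X ω) (min_le_left (v ω) r)
    have h1 : h t ≤ (P {ω | t ≤ v ω}).toReal :=
      ENNReal.toReal_mono (measure_ne_top _ _) (measure_mono hsub)
    rw [htail t] at h1
    exact h1.trans (htail_le t ht)
  -- split the integral
  have hrs0 : 0 < r * s := by positivity
  have hrsr : r * s ≤ r := by nlinarith
  have hsplit : Ioc (0:ℝ) r = Ioc 0 (r * s) ∪ Ioc (r * s) r :=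
    (Ioc_union_Ioc_eq_Ioc hrs0.le hrsr).symm
  have hint1 : IntegrableOn h (Ioc 0 (r * s)) :=
    hhint.mono_set (Ioc_subset_Ioc_right hrsr)
  have hint2 : IntegrableOn h (Ioc (r * s) r) :=
    hhint.mono_set (Ioc_subset_Ioc_left hrs0.le)
  have hsum : ∫ t in Ioc 0 r, h t
      = (∫ t in Ioc 0 (r * s), h t) + ∫ t in Ioc (r * s) r, h t := by
    rw [hsplit]
    exact setIntegral_union (Ioc_disjoint_Ioc_of_le le_rfl) measurableSet_Ioc hint1 hint2
  -- first piece ≤ r * s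
  have hpiece1 : ∫ t in Ioc 0 (r * s), h t ≤ r * s := by
    have hb : ∫ t in Ioc 0 (r * s), h t ≤ ∫ t in Ioc (0:ℝ) (r * s), (1 : ℝ) := by
      apply setIntegral_mono_on hint1 (integrableOn_const measure_Ioc_lt_top.ne)
        measurableSet_Ioc
      intro t _
      exact hh1 t
    rw [setIntegral_const] at hb
    simp only [smul_eq_mul, mul_one, Real.volume_Ioc, sub_zero] at hb
    rwa [Real.volume_real_Ioc_of_le hrs0.le, sub_zero] at hb
  -- second piece ≤ ∫ r*s/t
  have hg_int : IntegrableOn (fun t => r * s / t) (Ioc (r * s) r) := by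
    have : IntervalIntegrable (fun t => r * s / t) volume (r * s) r := by
      have h1 : IntervalIntegrable (fun t : ℝ => 1 / t) volume (r * s) r := by
        apply intervalIntegral.intervalIntegrable_one_div
        · intro x hx
          rw [uIcc_of_le hrsr] at hx
          exact (hrs0.trans_le hx.1).ne'
        · exact continuousOn_id
      have := h1.const_mul (r * s)
      simpa [mul_one_div, div_eq_mul_inv] using this
    rwa [intervalIntegrable_iff_integrableOn_Ioc_of_le hrsr] at this
  have hpiece2 : ∫ t in Ioc (r * s) r, h t ≤ r * s * (- Real.log s) := by
    have hb : ∫ t in Ioc (r * s) r, h t ≤ ∫ t in Ioc (r * s) r, r * s / t := by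
      apply setIntegral_mono_on hint2 hg_int measurableSet_Ioc
      intro t ht
      exact hh_le t (hrs0.trans ht.1)
    have heval : ∫ t in Ioc (r * s) r, r * s / t = r * s * (- Real.log s) := by
      rw [← intervalIntegral.integral_of_le hrsr]
      have : ∫ t in (r * s)..r, r * s / t = ∫ t in (r * s)..r, (r * s) * (1 / t) := by
        congr 1; funext t; rw [div_eq_mul_one_div]
      have hnz : (0:ℝ) ∉ Set.uIcc (r * s) r := by
        intro hx
        rw [uIcc_of_le hrsr] at hx
        exact absurd hx.1 (by linarith [hrs0])
      rw [this, intervalIntegral.integral_const_mul, integral_one_div hnz]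
      have hrr : r / (r * s) = s⁻¹ := by field_simp
      rw [hrr, Real.log_inv]
    linarith [hb, heval.le, heval.ge]
  -- combine: μX ≤ r*s*(1 - log s)
  have hμle' : μX ≤ r * s + r * s * (- Real.log s) := by
    rw [hlayer, hsum]; linarith
  -- elementary inequality
  have hlog := aux_log hs0 hs1
  have hsinv : s * s⁻¹ = 1 := mul_inv_cancel₀ hs0.ne'
  have hkey : - (s * Real.log s) ≤ (1 - s ^ 2) / 2 := by
    nlinarith [mul_le_mul_of_nonneg_left hlog hs0.le]
  have hμle : μX ≤ r * (1 - (1 - s) ^ 2 / 2) := by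
    have : r * s + r * s * (- Real.log s) = r * (s + (- (s * Real.log s))) := by ring
    rw [this] at hμle'
    have h2 : s + (- (s * Real.log s)) ≤ 1 - (1 - s) ^ 2 / 2 := by nlinarith
    nlinarith
  have hgap : r * ((1 - s) ^ 2 / 2) ≤ r - μX := by nlinarith
  have hgap0 : 0 ≤ r * ((1 - s) ^ 2 / 2) := by positivity
  -- variance lower bound
  set A : Set Ω := {ω | r ≤ v ω} with hAdef
  have hA : MeasurableSet A := measurableSet_le measurable_const hv
  have hPA : (P A).toReal = s := by rw [htail r, ← hs]
  have hsqint : Integrable (fun ω => (X ω - μX) ^ 2) P := by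
    have := (hmem.sub (memLp_const μX)).integrable_sq
    simpa using this
  have hvar : variance X P = ∫ ω, (X ω - μX) ^ 2 ∂P := by
    rw [variance_eq_integral hXmeas.aemeasurable]
  have hstep1 : ∫ ω in A, (X ω - μX) ^ 2 ∂P ≤ ∫ ω, (X ω - μX) ^ 2 ∂P :=
    setIntegral_le_integral hsqint (ae_of_all _ fun ω => sq_nonneg _)
  have hstep2 : (r - μX) ^ 2 * (P A).toReal ≤ ∫ ω in A, (X ω - μX) ^ 2 ∂P := by
    apply setIntegral_ge_of_const_le_real hA (measure_ne_top _ _)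
    · intro ω hω
      have hXω : X ω = r := min_eq_right hω
      rw [hXω]
    · exact hsqint.integrableOn
  have hvar_ge : variance X P ≥ (r - μX) ^ 2 * s := by
    rw [hvar, ← hPA]
    exact le_trans hstep2 hstep1
  have hsq : (r * ((1 - s) ^ 2 / 2)) ^ 2 ≤ (r - μX) ^ 2 :=
    pow_le_pow_left₀ hgap0 hgap 2
  calc variance X P ≥ (r - μX) ^ 2 * s := hvar_ge
    _ ≥ (r * ((1 - s) ^ 2 / 2)) ^ 2 * s := by nlinarith
    _ = s * r ^ 2 * (1 - s) ^ 4 / 4 := by ring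
end

section
/- Let v be a nonnegative random variable with CDF F, let r > 0 be a revenue-maximizing price, and let q ∈ [0, r]. Write μ(x) = E[min(v, x)] and σ²(x) = Var(min(v, x)), and rem(x) = x - μ(x). Then (σ²(r) - σ²(q)) / (2·rem(q)) ≥ μ(r) - μ(q) ≥ (σ²(r) - σ²(q)) / (2·rem(r)), provided rem(q) > 0. -/
open MeasureTheory ProbabilityTheory

theorem stmt_6 {Ω : Type*} [MeasurableSpace Ω] (P : Measure Ω) [IsProbabilityMeasure P]
    (v : Ω → ℝ) (hv : Measurable v) (hv0 : ∀ᵐ ω ∂P, 0 ≤ v ω)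
    (F : ℝ → ℝ) (hF : ∀ x, F x = (P {ω | v ω < x}).toReal)
    (r : ℝ) (hr : 0 < r)
    (hmax : ∀ w, 0 ≤ w → w * (1 - F w) ≤ r * (1 - F r))
    (q : ℝ) (hq : q ∈ Set.Icc (0:ℝ) r)
    (μ : ℝ → ℝ) (hμ : ∀ x, μ x = ∫ ω, min (v ω) x ∂P)
    (σ2 : ℝ → ℝ) (hσ2 : ∀ x, σ2 x = variance (fun ω => min (v ω) x) P)
    (hrem : 0 < q - μ q) :
    (σ2 r - σ2 q) / (2 * (q - μ q)) ≥ μ r - μ q ∧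
      μ r - μ q ≥ (σ2 r - σ2 q) / (2 * (r - μ r)) := by
  obtain ⟨hq0, hqr⟩ := hq
  set X : Ω → ℝ := fun ω => min (v ω) r with hXdef
  set Y : Ω → ℝ := fun ω => min (v ω) q with hYdef
  have hXm : Measurable X := hv.min measurable_const
  have hYm : Measurable Y := hv.min measurable_const
  have hXb : ∀ᵐ ω ∂P, ‖X ω‖ ≤ r := by
    filter_upwards [hv0] with ω h0
    rw [Real.norm_eq_abs, abs_le]
    refine ⟨?_, min_le_right _ _⟩
    have h1 : (0:ℝ) ≤ X ω := le_min h0 hr.le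
    linarith
  have hYb : ∀ᵐ ω ∂P, ‖Y ω‖ ≤ r := by
    filter_upwards [hv0] with ω h0
    rw [Real.norm_eq_abs, abs_le]
    refine ⟨?_, le_trans (min_le_right _ _) hqr⟩
    have h1 : (0:ℝ) ≤ Y ω := le_min h0 hq0
    linarith
  have hX2 : MemLp X 2 P :=
    (memLp_top_of_bound hXm.aestronglyMeasurable r hXb).mono_exponent le_top
  have hY2 : MemLp Y 2 P :=
    (memLp_top_of_bound hYm.aestronglyMeasurable r hYb).mono_exponent le_top
  have hD2 : MemLp (fun ω => X ω - Y ω) 2 P := hX2.sub hY2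
  have iX : Integrable X P := hX2.integrable one_le_two
  have iY : Integrable Y P := hY2.integrable one_le_two
  have iD : Integrable (fun ω => X ω - Y ω) P := iX.sub iY
  have iD2 : Integrable (fun ω => (X ω - Y ω) ^ 2) P := by
    simpa using hD2.integrable_sq
  -- pointwise facts
  have hYX : ∀ ω, Y ω ≤ X ω := fun ω => min_le_min le_rfl hqr
  have hDle : ∀ ω, X ω - Y ω ≤ r - q := by
    intro ω
    simp only [hXdef, hYdef, min_def]
    split_ifs <;> linarith
  have hkey : ∀ ω, X ω ^ 2 - Y ω ^ 2 = (X ω - Y ω) ^ 2 + 2 * q * (X ω - Y ω) := by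
    intro ω
    rcases le_total (v ω) q with h | h
    · have hY : Y ω = v ω := min_eq_left h
      have hX : X ω = v ω := min_eq_left (h.trans hqr)
      rw [hX, hY]; ring
    · have hY : Y ω = q := min_eq_right h
      rw [hY]; ring
  -- notations for integrals
  set a : ℝ := ∫ ω, Y ω ∂P with ha
  set b : ℝ := ∫ ω, X ω ∂P with hb
  have hab : a ≤ b := integral_mono iY iX hYX
  have hintD : ∫ ω, (X ω - Y ω) ∂P = b - a := integral_sub iX iY
  have hmle : b - a ≤ r - q := by
    have := integral_mono iD (integrable_const (r - q)) hDle
    rwa [hintD, integral_const, probReal_univ, smul_eq_mul, one_mul] at this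
  have hvarD : (b - a) ^ 2 ≤ ∫ ω, (X ω - Y ω) ^ 2 ∂P := by
    have h0 : 0 ≤ variance (fun ω => X ω - Y ω) P := variance_nonneg _ _
    have hvd := variance_eq_sub hD2
    simp only [Pi.pow_apply] at hvd
    rw [hvd, hintD] at h0
    linarith
  have hsqle : ∫ ω, (X ω - Y ω) ^ 2 ∂P ≤ (r - q) * (b - a) := by
    have hmono : ∀ ω, (X ω - Y ω) ^ 2 ≤ (r - q) * (X ω - Y ω) := by
      intro ω
      have h1 := hYX ω
      have h2 := hDle ω
      nlinarith
    have := integral_mono iD2 (iD.const_mul (r - q)) hmono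
    rwa [integral_const_mul, hintD] at this
  -- variance difference
  have hvX := variance_eq_sub hX2
  have hvY := variance_eq_sub hY2
  simp only [Pi.pow_apply] at hvX hvY
  have hdiff : σ2 r - σ2 q =
      (∫ ω, (X ω - Y ω) ^ 2 ∂P) + 2 * q * (b - a) - (b ^ 2 - a ^ 2) := by
    have h1 : ∫ ω, (X ω ^ 2 - Y ω ^ 2) ∂P
        = ∫ ω, ((X ω - Y ω) ^ 2 + 2 * q * (X ω - Y ω)) ∂P := by
      congr 1; funext ω; exact hkey ω
    have h2 : ∫ ω, (X ω ^ 2 - Y ω ^ 2) ∂P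
        = (∫ ω, X ω ^ 2 ∂P) - ∫ ω, Y ω ^ 2 ∂P := by
      refine integral_sub ?_ ?_
      · simpa using hX2.integrable_sq
      · simpa using hY2.integrable_sq
    have h3 : ∫ ω, ((X ω - Y ω) ^ 2 + 2 * q * (X ω - Y ω)) ∂P
        = (∫ ω, (X ω - Y ω) ^ 2 ∂P) + 2 * q * (b - a) := by
      rw [integral_add iD2 (iD.const_mul (2 * q)), integral_const_mul, hintD]
    rw [hσ2 r, hσ2 q, hvX, hvY]
    have : (∫ ω, X ω ^ 2 ∂P) - ∫ ω, Y ω ^ 2 ∂P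
        = (∫ ω, (X ω - Y ω) ^ 2 ∂P) + 2 * q * (b - a) := by rw [← h2, h1, h3]
    rw [← ha, ← hb] at *
    linarith [this]
  have hμq : μ q = a := (hμ q).trans rfl
  have hμr : μ r = b := (hμ r).trans rfl
  rw [hμq] at hrem
  rw [hμq, hμr]
  have hremr : 0 < r - b := by linarith
  constructor
  · rw [ge_iff_le, le_div_iff₀ (by linarith)]
    nlinarith [hvarD, hdiff]
  · rw [ge_iff_le, div_le_iff₀ (by linarith)]
    nlinarith [hsqle, hdiff, mul_nonneg (sub_nonneg.mpr hab) (sub_nonneg.mpr hmle)]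
end

section
/- Let v be a nonnegative random variable with CDF F and revenue-maximizing price r > 0, with F(r) > 0. For any K ≥ 4 and C ≥ 1 - F(r)⁴/(2K+1), it holds that C·r - E[min(v, C·r)] ≥ (4/5)·(r - E[min(v, r)]). -/
open MeasureTheory ProbabilityTheory
open Set

theorem stmt_7 {Ω : Type*} [MeasurableSpace Ω] (P : Measure Ω) [IsProbabilityMeasure P]
    (v : Ω → ℝ) (hv : Measurable v) (hv0 : ∀ᵐ ω ∂P, 0 ≤ v ω)
    (F : ℝ → ℝ) (hF : ∀ x, F x = (P {ω | v ω < x}).toReal)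
    (r : ℝ) (hr : 0 < r)
    (hmax : ∀ w, 0 ≤ w → w * (1 - F w) ≤ r * (1 - F r))
    (hFr : 0 < F r)
    (K C : ℝ) (hK : 4 ≤ K) (hC : C ≥ 1 - (F r) ^ 4 / (2 * K + 1)) :
    C * r - ∫ ω, min (v ω) (C * r) ∂P ≥ (4 / 5) * (r - ∫ ω, min (v ω) r ∂P) := by
  set p : ℝ := F r with hp
  -- basic facts about probabilities
  have htoReal_le_one : ∀ s : Set Ω, (P s).toReal ≤ 1 := by
    intro s
    have := ENNReal.toReal_mono (measure_ne_top P univ) (measure_mono (subset_univ s))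
    simpa [measure_univ] using this
  have hp1 : p ≤ 1 := by rw [hp, hF]; exact htoReal_le_one _
  have hp0 : 0 < p := hFr
  -- the CDF with ≤
  set g : ℝ → ℝ := fun t => (P {ω | v ω ≤ t}).toReal with hg
  have hg_mono : Monotone g := by
    intro s t hst
    exact ENNReal.toReal_mono (measure_ne_top _ _)
      (measure_mono (fun ω h => le_trans h hst))
  have hg_meas : Measurable g := hg_mono.measurable
  have hg0 : ∀ t, 0 ≤ g t := fun t => ENNReal.toReal_nonneg
  have hg1 : ∀ t, g t ≤ 1 := fun t => htoReal_le_one _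
  have hFg : ∀ t, F t ≤ g t := by
    intro t
    rw [hF]
    exact ENNReal.toReal_mono (measure_ne_top _ _)
      (measure_mono (by
        intro ω h
        simp only [Set.mem_setOf_eq] at *
        exact le_of_lt h))
  have hg_lt_r : ∀ t, t < r → g t ≤ p := by
    intro t ht
    rw [hp, hF]
    exact ENNReal.toReal_mono (measure_ne_top _ _)
      (measure_mono (fun ω (h : v ω ≤ t) => lt_of_le_of_lt h ht))
  have hg_intOn : ∀ a b : ℝ, IntegrableOn g (Ioo a b) := by
    intro a b
    have hfin : volume (Ioo a b) < ⊤ := by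
      rw [Real.volume_Ioo]; exact ENNReal.ofReal_lt_top
    refine Measure.integrableOn_of_bounded hfin.ne hg_meas.aestronglyMeasurable
      (M := 1) ?_
    filter_upwards with t
    rw [Real.norm_eq_abs, abs_of_nonneg (hg0 t)]
    exact hg1 t
  -- layer cake: q - E[min(v,q)] = ∫_{(0,q)} g
  have hrem : ∀ q : ℝ, 0 ≤ q → q - ∫ ω, min (v ω) q ∂P = ∫ t in Ioo 0 q, g t := by
    intro q hq
    have hf_nn : 0 ≤ᵐ[P] fun ω => min (v ω) q := by
      filter_upwards [hv0] with ω h0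
      exact le_min h0 hq
    have hf_int : Integrable (fun ω => min (v ω) q) P := by
      refine Integrable.mono' (integrable_const q)
        (hv.min measurable_const).aestronglyMeasurable ?_
      filter_upwards [hv0] with ω h0
      rw [Real.norm_eq_abs, abs_of_nonneg (le_min h0 hq)]
      exact min_le_right _ _
    rw [hf_int.integral_eq_integral_meas_lt hf_nn]
    have hcongr : EqOn (fun t => (P {a | t < min (v a) q}).toReal)
        ((Ioo 0 q).indicator (fun t => 1 - g t)) (Ioi 0) := by
      intro t ht
      rcases lt_or_ge t q with htq | htq
      · have hmem : t ∈ Ioo 0 q := ⟨ht, htq⟩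
        rw [indicator_of_mem hmem]
        have hset : {a | t < min (v a) q} = {ω | v ω ≤ t}ᶜ := by
          ext a; simp [lt_min_iff, htq, not_le]
        simp only [hset]
        rw [measure_compl (measurableSet_le hv measurable_const) (measure_ne_top _ _),
          measure_univ, ENNReal.toReal_sub_of_le (prob_le_one) ENNReal.one_ne_top]
        simp [hg]
      · have hmem : t ∉ Ioo 0 q := fun h => absurd h.2 (not_lt.2 htq)
        rw [indicator_of_notMem hmem]
        have hset : {a | t < min (v a) q} = (∅ : Set Ω) := by
          ext a
          simp only [Set.mem_setOf_eq, Set.mem_empty_iff_false, iff_false, not_lt]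
          exact le_trans (min_le_right _ _) htq
        simp only [hset, measure_empty, ENNReal.toReal_zero]
    rw [setIntegral_congr_fun measurableSet_Ioi (show EqOn (fun t => P.real {a | t < min (v a) q}) _ _ from hcongr),
      setIntegral_indicator measurableSet_Ioo]
    have hinter : Ioi (0:ℝ) ∩ Ioo 0 q = Ioo 0 q := by
      apply inter_eq_self_of_subset_right
      exact Ioo_subset_Ioi_self
    rw [hinter]
    have h1int : IntegrableOn (fun _ : ℝ => (1:ℝ)) (Ioo 0 q) := by
      refine integrableOn_const ?_
      rw [Real.volume_Ioo]; exact ENNReal.ofReal_lt_top.ne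
    have : ∫ t in Ioo 0 q, (1 - g t) = (∫ t in Ioo 0 q, (1:ℝ)) - ∫ t in Ioo 0 q, g t :=
      integral_sub h1int (hg_intOn 0 q)
    rw [this, setIntegral_const, measureReal_def, Real.volume_Ioo, ENNReal.toReal_ofReal (by linarith),
      smul_eq_mul]
    ring
  -- nonnegativity and monotonicity of rem
  have hrem_nonneg : ∀ a b : ℝ, 0 ≤ ∫ t in Ioo a b, g t :=
    fun a b => setIntegral_nonneg measurableSet_Ioo (fun t _ => hg0 t)
  -- C ≥ 8/9 > 0
  have hp4 : p ^ 4 ≤ 1 := pow_le_one₀ hp0.le hp1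
  have hKpos : (9:ℝ) ≤ 2 * K + 1 := by linarith
  have hCp : 1 - C ≤ p ^ 4 / 9 := by
    have h1 : p ^ 4 / (2 * K + 1) ≤ p ^ 4 / 9 :=
      div_le_div_of_nonneg_left (by positivity) (by norm_num) hKpos
    linarith [hC]
  have hC0 : (0:ℝ) < C := by nlinarith
  rw [hrem r hr.le, hrem (C * r) (by positivity)]
  -- lower bound on rem r
  set b : ℝ := 9 * r * (1 - p) / (9 - 5 * p) with hbdef
  have hD : (0:ℝ) < 9 - 5 * p := by linarith
  have hb0 : 0 ≤ b := by
    apply div_nonneg _ hD.le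
    nlinarith
  have hbr : b ≤ r := by
    rw [div_le_iff₀ hD]
    nlinarith
  have hlow : (r - b) * (5 * p / 9) ≤ ∫ t in Ioo 0 r, g t := by
    have h1 : ∫ t in Ioo b r, (5 * p / 9 : ℝ) ≤ ∫ t in Ioo b r, g t := by
      refine setIntegral_mono_on (integrableOn_const ?_) (hg_intOn b r)
        measurableSet_Ioo ?_
      · rw [Real.volume_Ioo]; exact ENNReal.ofReal_lt_top.ne
      · intro t ht
        have ht0 : 0 < t := lt_of_le_of_lt hb0 ht.1
        have hFt : 1 - r * (1 - p) / t ≤ F t := by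
          have h1 : 1 - F t ≤ r * (1 - p) / t := by
            rw [le_div_iff₀ ht0]
            nlinarith [hmax t ht0.le]
          linarith
        have h9 : 9 * r * (1 - p) ≤ (9 - 5 * p) * t := by
          calc 9 * r * (1 - p) = b * (9 - 5 * p) := by
                rw [hbdef]; rw [div_mul_cancel₀ _ hD.ne']
            _ ≤ t * (9 - 5 * p) := mul_le_mul_of_nonneg_right ht.1.le hD.le
            _ = (9 - 5 * p) * t := by ring
        have hstep : 5 * p / 9 ≤ 1 - r * (1 - p) / t := by
          have h2 : r * (1 - p) / t ≤ 1 - 5 * p / 9 := by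
            rw [div_le_iff₀ ht0]
            nlinarith
          linarith
        exact le_trans hstep (le_trans hFt (hFg t))
    have h2 : ∫ t in Ioo b r, g t ≤ ∫ t in Ioo 0 r, g t := by
      refine setIntegral_mono_set (hg_intOn 0 r) ?_ ?_
      · filter_upwards with t using hg0 t
      · exact HasSubset.Subset.eventuallyLE (fun t ht => ⟨lt_of_le_of_lt hb0 ht.1, ht.2⟩)
    have h3 : ∫ t in Ioo b r, (5 * p / 9 : ℝ) = (r - b) * (5 * p / 9) := by
      rw [setIntegral_const, measureReal_def, Real.volume_Ioo, ENNReal.toReal_ofReal (by linarith), smul_eq_mul]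
    linarith
  have hrb : p ^ 4 * r ≤ r - b := by
    rw [hbdef, le_sub_iff_add_le, ← sub_nonneg]
    have : r - (p ^ 4 * r + 9 * r * (1 - p) / (9 - 5 * p))
        = r * (4 * p - (9 - 5 * p) * p ^ 4) / (9 - 5 * p) := by
      rw [eq_div_iff hD.ne', sub_mul, add_mul, div_mul_cancel₀ _ hD.ne']; ring
    rw [this]
    apply div_nonneg _ hD.le
    apply mul_nonneg hr.le
    nlinarith [hp4, sq_nonneg (1 - p), sq_nonneg p,
      mul_nonneg hp0.le (sq_nonneg (1 - p))]
  have hremr : 5 * r * p ^ 5 / 9 ≤ ∫ t in Ioo 0 r, g t := by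
    have : 5 * r * p ^ 5 / 9 ≤ (r - b) * (5 * p / 9) := by
      have := mul_le_mul_of_nonneg_right hrb (by positivity : (0:ℝ) ≤ 5 * p / 9)
      calc 5 * r * p ^ 5 / 9 = p ^ 4 * r * (5 * p / 9) := by ring
        _ ≤ (r - b) * (5 * p / 9) := this
    linarith [hlow]
  rcases le_or_gt r (C * r) with hCr | hCr
  · -- C ≥ 1 case: rem is monotone
    have hmono : ∫ t in Ioo 0 r, g t ≤ ∫ t in Ioo 0 (C * r), g t := by
      refine setIntegral_mono_set (hg_intOn 0 (C * r)) ?_ ?_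
      · filter_upwards with t using hg0 t
      · exact HasSubset.Subset.eventuallyLE (fun t ht => ⟨ht.1, lt_of_lt_of_le ht.2 hCr⟩)
    nlinarith [hrem_nonneg 0 r]
  · -- C < 1 case
    have hC1 : C < 1 := by
      by_contra h
      push_neg at h
      nlinarith
    have hCrpos : 0 < C * r := by positivity
    have hg_intOn2 : IntegrableOn g (Ico (C * r) r) := by
      have hfin : volume (Ico (C * r) r) < ⊤ := by
        rw [Real.volume_Ico]; exact ENNReal.ofReal_lt_top
      refine Measure.integrableOn_of_bounded hfin.ne hg_meas.aestronglyMeasurable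
        (M := 1) ?_
      filter_upwards with t
      rw [Real.norm_eq_abs, abs_of_nonneg (hg0 t)]
      exact hg1 t
    have hdisj : Disjoint (Ioo 0 (C * r)) (Ico (C * r) r) := by
      rw [Set.disjoint_left]
      rintro t ⟨_, h2⟩ ⟨h3, _⟩
      exact absurd h3 (not_le.2 h2)
    have hsplit : ∫ t in Ioo 0 r, g t
        = (∫ t in Ioo 0 (C * r), g t) + ∫ t in Ico (C * r) r, g t := by
      rw [← setIntegral_union hdisj measurableSet_Ico (hg_intOn 0 (C * r)) hg_intOn2,
        Ioo_union_Ico_eq_Ioo hCrpos hCr.le]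
    have hdiff : ∫ t in Ico (C * r) r, g t ≤ (r - C * r) * p := by
      rw [integral_Ico_eq_integral_Ioo]
      have h1 : ∫ t in Ioo (C * r) r, g t ≤ ∫ t in Ioo (C * r) r, (p : ℝ) := by
        refine setIntegral_mono_on (hg_intOn (C * r) r)
          (integrableOn_const ?_) measurableSet_Ioo ?_
        · rw [Real.volume_Ioo]; exact ENNReal.ofReal_lt_top.ne
        · exact fun t ht => hg_lt_r t ht.2
      have h2 : ∫ t in Ioo (C * r) r, (p : ℝ) = (r - C * r) * p := by
        rw [setIntegral_const, measureReal_def, Real.volume_Ioo, ENNReal.toReal_ofReal (by linarith), smul_eq_mul]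
      linarith
    have hkey : (r - C * r) * p ≤ (1 / 5) * ∫ t in Ioo 0 r, g t := by
      have h1 : (r - C * r) * p = (1 - C) * (r * p) := by ring
      have h2 : (1 - C) * (r * p) ≤ (p ^ 4 / 9) * (r * p) :=
        mul_le_mul_of_nonneg_right hCp (by positivity)
      have h3 : (p ^ 4 / 9) * (r * p) = (1 / 5) * (5 * r * p ^ 5 / 9) := by ring
      nlinarith [hremr]
    linarith [hsplit, hdiff, hkey]
end

section
/- Let D be the two-point distribution taking value H = 1/x² with probability x and value 0 otherwise, where 0 < x < 1/2. Consider two i.i.d. item values v₁, v₂ ~ D. If item seller 1 prices at q₁ ≤ H/2 + ε/2, her revenue is at most q₁·x ≤ 1/(2x) + εx/2, whereas pricing at H against a principal selling the two-item bundle at price H + ε yields revenue at least H·x·(1-x) = (1-x)/x. For sufficiently small ε > 0, (1-x)/x > 1/(2x) + εx/2, so undercutting to q₁ ≤ H/2 + ε/2 is strictly worse. -/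
theorem stmt_14 (x H : ℝ) (hx0 : 0 < x) (hx : x < 1 / 2) (hH : H = 1 / x ^ 2) :
    (∀ ε q₁ : ℝ, 0 ≤ ε → 0 ≤ q₁ → q₁ ≤ H / 2 + ε / 2 →
        q₁ * x ≤ 1 / (2 * x) + ε * x / 2) ∧
      H * x * (1 - x) = (1 - x) / x ∧
      ∃ ε₀ > 0, ∀ ε : ℝ, 0 < ε → ε ≤ ε₀ → 1 / (2 * x) + ε * x / 2 < (1 - x) / x := by
  have hx2 : (0:ℝ) < x ^ 2 := by positivity
  have hxne : x ≠ 0 := hx0.ne'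
  refine ⟨?_, ?_, ?_⟩
  · intro ε q₁ hε hq hle
    have h1 : q₁ * x ≤ (H / 2 + ε / 2) * x := by nlinarith
    have h2 : (H / 2 + ε / 2) * x = 1 / (2 * x) + ε * x / 2 := by
      rw [hH]; field_simp
    linarith [h1, h2.le]
  · rw [hH]; field_simp
  · have h12 : (0:ℝ) < 1 - 2 * x := by linarith
    refine ⟨(1 - 2 * x) / (2 * x ^ 2), div_pos h12 (by positivity), fun ε hε hεle => ?_⟩
    have key : ε * (2 * x ^ 2) ≤ 1 - 2 * x := (le_div_iff₀ (by positivity)).mp hεle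
    have h : ε * x / 2 ≤ (1 - 2 * x) / (4 * x) := by
      rw [div_le_div_iff₀ (by norm_num) (by positivity)]
      nlinarith
    have h2 : 1 / (2 * x) + (1 - 2 * x) / (4 * x) < (1 - x) / x := by
      rw [div_add_div _ _ (by positivity) (by positivity), div_lt_div_iff₀ (by positivity) hx0]
      nlinarith
    linarith
end
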